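/- arXiv:math/0503615 — 3 statements merged into one kernel-verified Lean document; each statement's English description precedes it below -/
import Mathlib

section
/- Let M and N be Hilbert C*-modules over C*-algebras A and B respectively, let φ: A → B be a *-homomorphism, and let Φ: M → N be a map satisfying ⟨Φ(x), Φ(y)⟩ = φ(⟨x, y⟩) for all x, y ∈ M. Then Φ is complex-linear, i.e., Φ(αx + y) = αΦ(x) + Φ(y) for all x, y ∈ M and α ∈ ℂ. -/
/-- The core axioms of a (left) Hilbert C*-module over a C*-algebra `A`: an `A`-valued
inner product `inn`, `A`-linear in the first variable, conjugate-symmetric via `star`,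
and inducing the norm of `M`. -/
structure IsHilbertModule (A : Type*) {M : Type*} [CStarAlgebra A] [NormedAddCommGroup M]
    [NormedSpace ℂ M] [Module A M] [IsScalarTower ℂ A M] (inn : M → M → A) : Prop where
  add_left : ∀ x y z : M, inn (x + y) z = inn x z + inn y z
  smul_left : ∀ (a : A) (x y : M), inn (a • x) y = a * inn x y
  star_inner : ∀ x y : M, star (inn x y) = inn y x
  norm_eq : ∀ x : M, ‖x‖ = Real.sqrt ‖inn x x‖

/-- A Hilbert C*-module is *full* if the closed linear span of the inner products is all
of `A`. -/
def IsFullModule (A : Type*) {M : Type*} [CStarAlgebra A] [NormedAddCommGroup M]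
    [NormedSpace ℂ M] [Module A M] [IsScalarTower ℂ A M] (inn : M → M → A) : Prop :=
  Dense ((Submodule.span ℂ {a : A | ∃ x y : M, inn x y = a} : Submodule ℂ A) : Set A)

section aux
variable {A M : Type*} [CStarAlgebra A] [NormedAddCommGroup M]
    [NormedSpace ℂ M] [Module A M] [IsScalarTower ℂ A M] {inn : M → M → A}

lemma IsHilbertModule.csmul_left (h : IsHilbertModule A inn) (α : ℂ) (x y : M) :
    inn (α • x) y = α • inn x y := by
  have hx : α • x = (α • (1:A)) • x := by rw [smul_assoc, one_smul]
  rw [hx, h.smul_left, smul_mul_assoc, one_mul]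

lemma IsHilbertModule.add_right (h : IsHilbertModule A inn) (x y z : M) :
    inn x (y + z) = inn x y + inn x z := by
  rw [← h.star_inner, h.add_left, star_add, h.star_inner, h.star_inner]

lemma IsHilbertModule.csmul_right (h : IsHilbertModule A inn) (α : ℂ) (x y : M) :
    inn x (α • y) = (starRingEnd ℂ α) • inn x y := by
  rw [← h.star_inner, h.csmul_left, star_smul, h.star_inner]
  rfl

lemma IsHilbertModule.neg_left (h : IsHilbertModule A inn) (x y : M) :
    inn (-x) y = -inn x y := by
  have : (-x) = ((-1 : ℂ)) • x := by simp
  rw [this, h.csmul_left, neg_one_smul]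

lemma IsHilbertModule.neg_right (h : IsHilbertModule A inn) (x y : M) :
    inn x (-y) = -inn x y := by
  rw [← h.star_inner, h.neg_left, star_neg, h.star_inner]

lemma IsHilbertModule.sub_left (h : IsHilbertModule A inn) (x y z : M) :
    inn (x - y) z = inn x z - inn y z := by
  rw [sub_eq_add_neg, h.add_left, h.neg_left, sub_eq_add_neg]

lemma IsHilbertModule.sub_right (h : IsHilbertModule A inn) (x y z : M) :
    inn x (y - z) = inn x y - inn x z := by
  rw [sub_eq_add_neg, h.add_right, h.neg_right, sub_eq_add_neg]

lemma IsHilbertModule.eq_zero_of_inn_self (h : IsHilbertModule A inn) (x : M)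
    (hx : inn x x = 0) : x = 0 := by
  have : ‖x‖ = 0 := by rw [h.norm_eq, hx]; simp
  exact norm_eq_zero.mp this

end aux

/-- a `φ`-morphism of Hilbert C*-modules is complex-linear. -/
theorem phiMorphism_linear {A B M N : Type*} [CStarAlgebra A] [CStarAlgebra B]
    [NormedAddCommGroup M] [NormedSpace ℂ M] [Module A M] [IsScalarTower ℂ A M]
    [NormedAddCommGroup N] [NormedSpace ℂ N] [Module B N] [IsScalarTower ℂ B N]
    (innM : M → M → A) (innN : N → N → B)
    (hM : IsHilbertModule A innM) (hN : IsHilbertModule B innN)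
    (φ : A →⋆ₐ[ℂ] B) (Φ : M → N)
    (hΦ : ∀ x y : M, innN (Φ x) (Φ y) = φ (innM x y)) :
    ∀ (α : ℂ) (x y : M), Φ (α • x + y) = α • Φ x + Φ y := by
  intro α x y
  have key : innN (Φ (α • x + y) - (α • Φ x + Φ y)) (Φ (α • x + y) - (α • Φ x + Φ y)) = 0 := by
    simp only [hN.sub_left, hN.sub_right, hN.add_left, hN.add_right, hN.csmul_left,
      hN.csmul_right, hΦ, hM.add_left, hM.add_right, hM.csmul_left, hM.csmul_right,
      map_add, map_smul]
    module
  have := hN.eq_zero_of_inn_self _ key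
  exact sub_eq_zero.mp this
end

section
/- Let M be a simple full Hilbert C*-module over A (i.e., M has no nontrivial closed left A-submodules) and δ: D(δ) ⊆ M → M a generalized derivation. Then either δ is closable (as an unbounded operator) or the range of δ is dense in M. -/
open Filter Topology

/-- The separating space `σ(δ)` of the map `δ` with domain `D`; it is `{0}` exactly when `δ` is
closable. -/
def separatingSpace {E F : Type*} [TopologicalSpace E] [TopologicalSpace F] [Zero E]
    (D : Set E) (δ : E → F) : Set F :=
  {y | ∃ u : ℕ → E, (∀ n, u n ∈ D) ∧ Tendsto u atTop (𝓝 0) ∧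
    Tendsto (fun n => δ (u n)) atTop (𝓝 y)}

section SeparatingSpace

variable {E F : Type*} [TopologicalSpace E] [TopologicalSpace F]

theorem mem_separatingSpace_iff_mem_closure_graph [Zero E] [FirstCountableTopology E]
    [FirstCountableTopology F] {D : Set E} {δ : E → F} {y : F} :
    y ∈ separatingSpace D δ ↔ ((0 : E), y) ∈ closure ((fun x => (x, δ x)) '' D) := by
  constructor
  · rintro ⟨u, hu, hu0, hδu⟩
    exact mem_closure_of_tendsto (hu0.prodMk_nhds hδu) (.of_forall fun n => ⟨u n, hu n, rfl⟩)
  · intro hy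
    obtain ⟨p, hp, hp_lim⟩ := mem_closure_iff_seq_limit.mp hy
    choose u hu hup using hp
    have hfst : Prod.fst ∘ p = u := funext fun n => by simp [← hup n]
    have hsnd : Prod.snd ∘ p = fun n => δ (u n) := funext fun n => by simp [← hup n]
    exact ⟨u, hu, hfst ▸ (continuous_fst.tendsto _).comp hp_lim,
      hsnd ▸ (continuous_snd.tendsto _).comp hp_lim⟩

theorem isClosed_separatingSpace [Zero E] [FirstCountableTopology E] [FirstCountableTopology F]
    (D : Set E) (δ : E → F) : IsClosed (separatingSpace D δ) := by
  have : separatingSpace D δ = (fun y => ((0 : E), y)) ⁻¹' closure ((fun x => (x, δ x)) '' D) :=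
    Set.ext fun _ => mem_separatingSpace_iff_mem_closure_graph
  rw [this]
  exact isClosed_closure.preimage (continuous_const.prodMk continuous_id)

theorem separatingSpace_subset_closure_image [Zero E] (D : Set E) (δ : E → F) :
    separatingSpace D δ ⊆ closure (δ '' D) := by
  rintro y ⟨u, hu, -, hδu⟩
  exact mem_closure_of_tendsto hδu (.of_forall fun n => ⟨u n, hu n, rfl⟩)

variable [AddCommMonoid E] [AddCommMonoid F] {D : AddSubmonoid E} {δ : E → F}

theorem zero_mem_separatingSpace (hδ : δ 0 = 0) : (0 : F) ∈ separatingSpace (D : Set E) δ :=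
  ⟨fun _ => 0, fun _ => D.zero_mem, tendsto_const_nhds, by simpa [hδ] using tendsto_const_nhds⟩

variable [ContinuousAdd E] [ContinuousAdd F]

theorem add_mem_separatingSpace (hδ : ∀ x ∈ D, ∀ y ∈ D, δ (x + y) = δ x + δ y) {y z : F}
    (hy : y ∈ separatingSpace (D : Set E) δ) (hz : z ∈ separatingSpace (D : Set E) δ) :
    y + z ∈ separatingSpace (D : Set E) δ := by
  obtain ⟨u, hu, hu0, hδu⟩ := hy
  obtain ⟨v, hv, hv0, hδv⟩ := hz
  refine ⟨fun n => u n + v n, fun n => D.add_mem (hu n) (hv n), by simpa using hu0.add hv0, ?_⟩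
  simpa only [hδ _ (hu _) _ (hv _)] using hδu.add hδv

end SeparatingSpace

section Module

variable {R M : Type*} [Semiring R] [TopologicalSpace M] [AddCommGroup M] [ContinuousAdd M]
  [Module R M] [ContinuousConstSMul R M] {D : AddSubmonoid M} {δ : M → M}

theorem smul_mem_separatingSpace {a c : R} (hD : ∀ x ∈ D, a • x ∈ D)
    (hδ : ∀ x ∈ D, δ (a • x) = a • δ x + c • x) {y : M} (hy : y ∈ separatingSpace (D : Set M) δ) :
    a • y ∈ separatingSpace (D : Set M) δ := by
  obtain ⟨u, hu, hu0, hδu⟩ := hy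
  refine ⟨fun n => a • u n, fun n => hD _ (hu n), by simpa using hu0.const_smul a, ?_⟩
  simpa [hδ _ (hu _)] using (hδu.const_smul a).add (hu0.const_smul c)

variable [TopologicalSpace R] [ContinuousSMul R M] [FirstCountableTopology M]

def separatingSubmodule {Dd : Set R} (hDd : Dense Dd) (d : R → R)
    (hD : ∀ a ∈ Dd, ∀ x ∈ D, a • x ∈ D) (hδadd : ∀ x ∈ D, ∀ y ∈ D, δ (x + y) = δ x + δ y)
    (hLeib : ∀ a ∈ Dd, ∀ x ∈ D, δ (a • x) = a • δ x + d a • x) : Submodule R M where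
  carrier := separatingSpace (D : Set M) δ
  add_mem' := add_mem_separatingSpace hδadd
  zero_mem' := zero_mem_separatingSpace <| by
    simpa using (hδadd 0 D.zero_mem 0 D.zero_mem).symm
  smul_mem' a y hy := hDd.induction (P := fun a => a • y ∈ separatingSpace (D : Set M) δ)
    (fun a ha => smul_mem_separatingSpace (hD a ha) (hLeib a ha) hy)
    ((isClosed_separatingSpace _ _).preimage (continuous_id.smul continuous_const)) a

end Module

theorem generalized_derivation_closable_or_dense_range_general {A M : Type*} [CStarAlgebra A]
    [NormedAddCommGroup M] [NormedSpace ℂ M] [Module A M]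
    [IsBoundedSMul A M]
    (hsimple : ∀ S : Submodule A M, IsClosed (S : Set M) → S = ⊥ ∨ S = ⊤)
    (Dd : NonUnitalSubalgebra ℂ A) (hDd : Dense (Dd : Set A))
    (Dδ : Submodule ℂ M)
    (hmod : ∀ a ∈ Dd, ∀ x ∈ Dδ, a • x ∈ Dδ)
    (δ : M → M) (d : A → A)
    (hδadd : ∀ x ∈ Dδ, ∀ y ∈ Dδ, δ (x + y) = δ x + δ y)
    (hLeib : ∀ a ∈ Dd, ∀ x ∈ Dδ, δ (a • x) = a • δ x + d a • x) :
    (∀ (u : ℕ → M), (∀ n, u n ∈ Dδ) → Tendsto u atTop (𝓝 0) →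
        ∀ y : M, Tendsto (fun n => δ (u n)) atTop (𝓝 y) → y = 0) ∨
      Dense (δ '' (Dδ : Set M)) := by
  let σ := separatingSubmodule (D := Dδ.toAddSubmonoid) hDd d hmod hδadd hLeib
  rcases hsimple σ (isClosed_separatingSpace _ _) with hσ | hσ
  · left
    intro u hu hu0 y hy
    have : y ∈ σ := ⟨u, hu, hu0, hy⟩
    simpa [hσ] using this
  · right
    refine dense_iff_closure_eq.mpr <| Set.eq_univ_of_forall fun y =>
      separatingSpace_subset_closure_image _ δ ?_
    change y ∈ σ
    simp [hσ]

/-- a generalized derivation on a simple full Hilbert C*-module is either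
closable or has dense range. -/
theorem generalized_derivation_closable_or_dense_range {A M : Type*} [CStarAlgebra A]
    [NormedAddCommGroup M] [NormedSpace ℂ M] [Module A M] [IsScalarTower ℂ A M]
    [IsBoundedSMul A M]
    (innM : M → M → A) (hM : IsHilbertModule A innM) (hfull : IsFullModule A innM)
    (hsimple : ∀ S : Submodule A M, IsClosed (S : Set M) → S = ⊥ ∨ S = ⊤)
    (Dd : NonUnitalSubalgebra ℂ A) (hDd : Dense (Dd : Set A))
    (Dδ : Submodule ℂ M) (hDδ : Dense (Dδ : Set M))
    (hmod : ∀ a ∈ Dd, ∀ x ∈ Dδ, a • x ∈ Dδ)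
    (δ : M → M) (d : A → A)
    (hδadd : ∀ x ∈ Dδ, ∀ y ∈ Dδ, δ (x + y) = δ x + δ y)
    (hδsmul : ∀ (z : ℂ), ∀ x ∈ Dδ, δ (z • x) = z • δ x)
    (hd : ∀ a ∈ Dd, ∀ b ∈ Dd, d (a * b) = a * d b + d a * b)
    (hLeib : ∀ a ∈ Dd, ∀ x ∈ Dδ, δ (a • x) = a • δ x + d a • x) :
    (∀ (u : ℕ → M), (∀ n, u n ∈ Dδ) → Tendsto u atTop (𝓝 0) →
        ∀ y : M, Tendsto (fun n => δ (u n)) atTop (𝓝 y) → y = 0) ∨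
      Dense (δ '' (Dδ : Set M)) :=
  generalized_derivation_closable_or_dense_range_general hsimple Dd hDd Dδ hmod δ d hδadd hLeib
end

section
/- Let M be a full Hilbert C*-module over A and α: ℝ → U(M) a dynamical system with associated *-automorphisms α'_t of A (α_t(ax) = α'_t(a)α_t(x)). Then for every a ∈ A, α'_t(a) → a in norm as t → 0; hence α' is a C*-dynamical system (strongly continuous one-parameter group of *-automorphisms) on A. -/
open Filter Topology

/-!
Writing `α_t (a • x) = α'_t a • α_t x` gives
`α'_t a • x = α'_t a • (x - α_t x) + α_t (a • x)`, and since `‖α'_t a‖ = ‖a‖` the first term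
tends to `0`, so `α'_t a • x → a • x` for every `x`. Pairing with `y` on the right, which is
continuous by polarization, gives `α'_t a * ⟪x, y⟫ → a * ⟪x, y⟫`. The maps `b ↦ α'_t a * b` are
uniformly Lipschitz, so the set of `b` with `α'_t a * b → a * b` is closed; it contains the dense
span of the inner products, hence `1`.
-/

namespace IsHilbertModule

variable {A M : Type*} [CStarAlgebra A] [NormedAddCommGroup M] [NormedSpace ℂ M] [Module A M]
  [IsScalarTower ℂ A M] {inn : M → M → A}

theorem smul_left_complex (hM : IsHilbertModule A inn) (c : ℂ) (x y : M) :
    inn (c • x) y = c • inn x y := by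
  rw [← smul_one_smul A c x, hM.smul_left, smul_one_mul]

theorem add_right_s15 (hM : IsHilbertModule A inn) (x y z : M) :
    inn x (y + z) = inn x y + inn x z := by
  rw [← hM.star_inner, hM.add_left, star_add, hM.star_inner, hM.star_inner]

theorem smul_right_complex (hM : IsHilbertModule A inn) (c : ℂ) (x y : M) :
    inn x (c • y) = star c • inn x y := by
  rw [← hM.star_inner, hM.smul_left_complex, star_smul, hM.star_inner]

theorem norm_self (hM : IsHilbertModule A inn) (x : M) : ‖inn x x‖ = ‖x‖ ^ 2 := by
  rw [hM.norm_eq x, Real.sq_sqrt (norm_nonneg _)]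

theorem four_smul_eq_sum (hM : IsHilbertModule A inn) (x y : M) :
    (4 : ℂ) • inn x y = ∑ k : Fin 4, Complex.I ^ (k : ℕ) •
      inn (x + Complex.I ^ (k : ℕ) • y) (x + Complex.I ^ (k : ℕ) • y) := by
  simp only [Fin.sum_univ_four, hM.add_left, hM.add_right_s15, hM.smul_left_complex,
    hM.smul_right_complex, smul_add, smul_smul]
  match_scalars <;> simp [Complex.ext_iff, pow_succ]; norm_num

theorem norm_le_sq (hM : IsHilbertModule A inn) (x y : M) :
    ‖inn x y‖ ≤ (‖x‖ + ‖y‖) ^ 2 := by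
  have hterm (k : ℕ) : ‖Complex.I ^ k • inn (x + Complex.I ^ k • y) (x + Complex.I ^ k • y)‖
      ≤ (‖x‖ + ‖y‖) ^ 2 := by
    rw [norm_smul, norm_pow, Complex.norm_I, one_pow, one_mul, hM.norm_self]
    gcongr
    refine (norm_add_le _ _).trans ?_
    rw [norm_smul, norm_pow, Complex.norm_I, one_pow, one_mul]
  have h4 : 4 * ‖inn x y‖ ≤ 4 * (‖x‖ + ‖y‖) ^ 2 := calc
    4 * ‖inn x y‖ = ‖(4 : ℂ) • inn x y‖ := by rw [norm_smul]; norm_num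
    _ ≤ ∑ k : Fin 4, (‖x‖ + ‖y‖) ^ 2 := by
      rw [hM.four_smul_eq_sum]
      exact norm_sum_le_of_le _ fun k _ => hterm k
    _ = 4 * (‖x‖ + ‖y‖) ^ 2 := by simp
  linarith

def innerLeft (hM : IsHilbertModule A inn) (y : M) : M →ₗ[ℂ] A where
  toFun x := inn x y
  map_add' x x' := hM.add_left x x' y
  map_smul' c x := hM.smul_left_complex c x y

theorem continuous_left (hM : IsHilbertModule A inn) (y : M) : Continuous (inn · y) := by
  have hbound : ∀ x, ‖hM.innerLeft y x‖ ≤ (2 * (1 + ‖y‖) ^ 2) * ‖x‖ :=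
    (hM.innerLeft y).bound_of_shell one_pos (c := (2 : ℂ)) (by norm_num) fun x hx _ => by
      have : 1 / 2 ≤ ‖x‖ := by simpa using hx
      calc ‖inn x y‖ ≤ (‖x‖ + ‖y‖) ^ 2 := hM.norm_le_sq x y
        _ ≤ (1 + ‖y‖) ^ 2 := by gcongr
        _ ≤ 2 * (1 + ‖y‖) ^ 2 * ‖x‖ := by nlinarith [sq_nonneg (1 + ‖y‖)]
  exact AddMonoidHomClass.continuous_of_bound (hM.innerLeft y) _ hbound

end IsHilbertModule

theorem tendsto_smul_of_intertwining {ι A M : Type*} [SeminormedRing A]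
    [SeminormedAddCommGroup M] [Module A M] [IsBoundedSMul A M] {l : Filter ι}
    {α : ι → M → M} {b : ι → A} {a : A} {C : ℝ} (hα : ∀ x, Tendsto (α · x) l (𝓝 x))
    (hb : ∀ t, ‖b t‖ ≤ C) (hab : ∀ t x, α t (a • x) = b t • α t x) (x : M) :
    Tendsto (b · • x) l (𝓝 (a • x)) := by
  have hsmall : Tendsto (fun t => b t • (x - α t x)) l (𝓝 0) := by
    have hsub : Tendsto (fun t => x - α t x) l (𝓝 0) := by
      simpa using (tendsto_const_nhds (x := x)).sub (hα x)
    exact hsub.op_zero_isBoundedUnder_le ⟨C, eventually_map.2 (.of_forall hb)⟩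
      (flip (· • ·)) fun m c => (norm_smul_le c m).trans_eq (mul_comm _ _)
  have hdecomp : ∀ t, b t • x = b t • (x - α t x) + α t (a • x) := fun t => by
    rw [hab, smul_sub, sub_add_cancel]
  simpa [hdecomp] using hsmall.add (hα (a • x))

theorem tendsto_of_forall_tendsto_mul {ι 𝕜 A : Type*} [NormedField 𝕜] [NormedRing A]
    [NormedAlgebra 𝕜 A] {l : Filter ι} {f : ι → A} {a : A} {C : ℝ} (hf : ∀ t, ‖f t‖ ≤ C)
    {S : Set A} (hS : Dense (Submodule.span 𝕜 S : Set A))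
    (h : ∀ b ∈ S, Tendsto (fun t => f t * b) l (𝓝 (a * b))) : Tendsto f l (𝓝 a) := by
  have hlip (t : ι) : LipschitzWith C.toNNReal (f t * ·) := .of_dist_le_mul fun b b' => by
    rw [dist_eq_norm, dist_eq_norm, ← mul_sub]
    exact (norm_mul_le _ _).trans (by gcongr; exact (hf t).trans C.le_coe_toNNReal)
  have hequi : Equicontinuous fun t (b : A) => f t * b :=
    (LipschitzWith.uniformEquicontinuous _ _ hlip).equicontinuous
  have hclosed := hequi.isClosed_setOfPred_tendsto (l := l) (continuous_const_mul a)
  have hspan : (Submodule.span 𝕜 S : Set A) ⊆ {b | Tendsto (fun t => f t * b) l (𝓝 (a * b))} := by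
    intro b hb
    induction hb using Submodule.span_induction with
    | mem b hb => exact h b hb
    | zero => simpa using tendsto_const_nhds
    | add b b' _ _ hb hb' => simpa [mul_add] using hb.add hb'
    | smul c b _ hb => simpa [mul_smul_comm] using hb.const_smul c
  have hone : (1 : A) ∈ closure (Submodule.span 𝕜 S : Set A) := by simp [hS.closure_eq]
  simpa using hclosed.closure_subset_iff.2 hspan hone

theorem dynamical_system_induced_strong_continuity_general {A M : Type*} [CStarAlgebra A]
    [NormedAddCommGroup M] [NormedSpace ℂ M] [Module A M] [IsScalarTower ℂ A M]
    [IsBoundedSMul A M]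
    (innM : M → M → A) (hM : IsHilbertModule A innM) (hfull : IsFullModule A innM)
    (α : ℝ → M → M) (α' : ℝ → A → A)
    (hαcont : ∀ x : M, Tendsto (fun t : ℝ => α t x) (𝓝 0) (𝓝 x))
    (hmod : ∀ (t : ℝ) (a : A) (x : M), α t (a • x) = α' t a • α t x)
    (hα'iso : ∀ (t : ℝ) (a : A), ‖α' t a‖ = ‖a‖) :
    ∀ a : A, Tendsto (fun t : ℝ => α' t a) (𝓝 0) (𝓝 a) := by
  intro a
  have hbound (t : ℝ) : ‖α' t a‖ ≤ ‖a‖ := (hα'iso t a).le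
  have hsmul : ∀ x, Tendsto (α' · a • x) (𝓝 0) (𝓝 (a • x)) :=
    tendsto_smul_of_intertwining hαcont hbound (hmod · a)
  refine tendsto_of_forall_tendsto_mul hbound hfull ?_
  rintro _ ⟨x, y, rfl⟩
  simp only [← hM.smul_left]
  exact ((hM.continuous_left y).tendsto _).comp (hsmul x)

/-- for a dynamical system `α` on a full Hilbert C*-module, the associated
one-parameter group `α'` of *-automorphisms of `A` is strongly continuous:
`α'_t(a) → a` in norm as `t → 0`. -/
theorem dynamical_system_induced_strong_continuity {A M : Type*} [CStarAlgebra A]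
    [NormedAddCommGroup M] [NormedSpace ℂ M] [Module A M] [IsScalarTower ℂ A M]
    [IsBoundedSMul A M]
    (innM : M → M → A) (hM : IsHilbertModule A innM) (hfull : IsFullModule A innM)
    (α : ℝ → M → M) (α' : ℝ → A → A)
    (hα0 : ∀ x : M, α 0 x = x)
    (hαgrp : ∀ t s : ℝ, ∀ x : M, α (t + s) x = α t (α s x))
    (hαsurj : ∀ t : ℝ, Function.Surjective (α t))
    (hαiso : ∀ (t : ℝ) (x : M), ‖α t x‖ = ‖x‖)
    (hαcont : ∀ x : M, Tendsto (fun t : ℝ => α t x) (𝓝 0) (𝓝 x))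
    (hinner : ∀ (t : ℝ) (x y : M), innM (α t x) (α t y) = α' t (innM x y))
    (hmod : ∀ (t : ℝ) (a : A) (x : M), α t (a • x) = α' t a • α t x)
    (hα'star : ∀ (t : ℝ) (a : A), α' t (star a) = star (α' t a))
    (hα'mul : ∀ (t : ℝ) (a b : A), α' t (a * b) = α' t a * α' t b)
    (hα'iso : ∀ (t : ℝ) (a : A), ‖α' t a‖ = ‖a‖) :
    ∀ a : A, Tendsto (fun t : ℝ => α' t a) (𝓝 0) (𝓝 a) :=
  dynamical_system_induced_strong_continuity_general innM hM hfull α α' hαcont hmod hα'iso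
end
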